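/- arXiv:1011.2283 — 3 statements merged into one kernel-verified Lean document; each statement's English description precedes it below -/
import Mathlib

section
/- Let S be a finite set with |S| = n ≥ 1050 and let G = ℤ/2 * ℤ/2 * ℤ/2, the free product of three copies of ℤ/2. Then there exist two G-invariant probability measures μ and ν on the configuration space (Finset S)^G (labels ordered by set inclusion) such that μ and ν admit a monotone coupling, but no monotone coupling of μ and ν is invariant under the diagonal left-translation action of G. -/
open MeasureTheory
open scoped ENNReal

/-- Left translation of a configuration `ω : G → Λ` by a group element `g`:
`(g • ω) x = ω (g⁻¹ x)`. -/
def configTranslate {G Λ : Type*} [Group G] (g : G) (ω : G → Λ) : G → Λ :=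
  fun x => ω (g⁻¹ * x)

/-- A measure on the configuration space `Λ^G` (with the product σ-algebra) is invariant if it
is preserved by every left translation. -/
def IsInvariantConfigMeasure {G Λ : Type*} [Group G] [MeasurableSpace Λ]
    (μ : Measure (G → Λ)) : Prop :=
  ∀ g : G, μ.map (configTranslate g) = μ

/-- A coupling of `μ` and `ν` is a measure on the product whose marginals are `μ` and `ν`. -/
def IsCoupling {α β : Type*} [MeasurableSpace α] [MeasurableSpace β]
    (π : Measure (α × β)) (μ : Measure α) (ν : Measure β) : Prop :=
  π.map Prod.fst = μ ∧ π.map Prod.snd = ν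

/-- A coupling of two configuration measures is monotone if almost surely the first component
is pointwise below the second (here labels are finite sets, ordered by inclusion). -/
def IsMonotoneCoupling {G Λ : Type*} [Preorder Λ] [MeasurableSpace Λ]
    (π : Measure ((G → Λ) × (G → Λ))) : Prop :=
  π {p | ∀ x : G, p.1 x ≤ p.2 x} = 1

/-- A measure on pairs of configurations is invariant under the diagonal left-translation
action of `G`. -/
def IsInvariantPairMeasure {G Λ : Type*} [Group G] [MeasurableSpace Λ]
    (π : Measure ((G → Λ) × (G → Λ))) : Prop :=
  ∀ g : G, π.map (fun p => (configTranslate g p.1, configTranslate g p.2)) = π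

/-!
Put i.i.d. uniform marks from `S` on the edges of the Cayley graph of `Γ = ℤ/2 * ℤ/2 * ℤ/2`, the
3-regular tree. Under `ν` each vertex is labelled by the marks of its three edges, under `μ` each
vertex carries two fresh marks of its own; labelling each vertex by the marks of its two edges
pointing away from `1` couples them monotonically.

Given a monotone coupling, say that a vertex claims an edge when one of its `μ`-marks lies in the
`ν`-label at the other end. Outside an event of probability `O(1/|S|)`, the two `μ`-marks at a
vertex are the marks of two different edges there, so the vertex claims at least two of its three
edges, while no edge is claimed from both ends. If the coupling were invariant, both ends of an edge
would claim it with the same probability, so a vertex would claim at most `3/2 + O(1/|S|)` edges on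
average: a contradiction once `|S|` is large.
-/

namespace Monoid.CoprodI.Word

variable {ι : Type*} {M : ι → Type*} [∀ i, Monoid (M i)] [DecidableEq ι] [∀ i, DecidableEq (M i)]

theorem fstIdx_eq_some_iff {i : ι} {w : Word M} :
    w.fstIdx = some i ↔ (equivPair i w).head ≠ 1 := by
  constructor
  · intro h hhead
    have hw : w = (equivPair i w).tail := by
      conv_lhs => rw [← (equivPair i).symm_apply_apply w, equivPair_symm, rcons, dif_pos hhead]
    exact (equivPair i w).fstIdx_ne (hw ▸ h)
  · intro h
    by_contra hne
    exact h (by rw [equivPair_eq_of_fstIdx_ne hne])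

theorem fstIdx_of_smul_eq_some_iff {i : ι} (m : M i) (w : Word M) :
    (of m • w).fstIdx = some i ↔ m * (equivPair i w).head ≠ 1 := by
  rw [fstIdx_eq_some_iff, equivPair_smul_same]

end Monoid.CoprodI.Word

open Function

section Iid

variable {ι κ A : Type*} [Fintype A] [Nonempty A] [MeasurableSpace A]

variable (ι A) in
noncomputable def uniformIid : Measure (ι → A) :=
  Measure.infinitePi fun _ : ι => (PMF.uniformOfFintype A).toMeasure

instance : IsProbabilityMeasure (uniformIid ι A) := by
  unfold uniformIid; infer_instance

lemma uniformIid_map_comp {f : κ → ι} (hf : Injective f) :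
    (uniformIid ι A).map (fun u => u ∘ f) = uniformIid κ A :=
  Measure.map_infinitePi_infinitePi_of_inj hf

lemma uniformIid_setOf_eq [MeasurableSingletonClass A] {z z' : ι} (h : z ≠ z') :
    uniformIid ι A {u | u z = u z'} = (Fintype.card A : ℝ≥0∞)⁻¹ := by
  have hm : ∀ a, (PMF.uniformOfFintype A).toMeasure {a} = (Fintype.card A : ℝ≥0∞)⁻¹ := fun a => by
    rw [PMF.toMeasure_apply_singleton _ _ (measurableSet_singleton a), PMF.uniformOfFintype_apply]
  have hdiag : {u : ι → A | u z = u z'} = (fun u => (u z, u z')) ⁻¹' {q | q.1 = q.2} := rfl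
  rw [hdiag, ← Measure.map_apply (by fun_prop) (measurableSet_eq_fun measurable_fst measurable_snd),
    uniformIid, Measure.infinitePi_map_eval_prod h,
    Measure.prod_apply (measurableSet_eq_fun measurable_fst measurable_snd), lintegral_fintype]
  simp only [Set.preimage_ofPred_eq, Set.ofPred_eq_eq_singleton', hm, Finset.sum_const,
    Finset.card_univ, nsmul_eq_mul]
  rw [← mul_assoc, ENNReal.mul_inv_cancel (by simp) (by simp), one_mul]

lemma uniformIid_setOf_exists_eq_le [MeasurableSingletonClass A] [Fintype κ] (f g : κ → ι) :
    uniformIid ι A {u | ∃ k, f k ≠ g k ∧ u (f k) = u (g k)} ≤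
      Fintype.card κ * (Fintype.card A : ℝ≥0∞)⁻¹ := by
  have hk : ∀ k, uniformIid ι A {u | f k ≠ g k ∧ u (f k) = u (g k)} ≤
      (Fintype.card A : ℝ≥0∞)⁻¹ := fun k => by
    by_cases hfg : f k = g k
    · simp [hfg]
    · exact (measure_mono fun u hu => hu.2).trans (uniformIid_setOf_eq hfg).le
  calc uniformIid ι A {u | ∃ k, f k ≠ g k ∧ u (f k) = u (g k)}
      ≤ ∑ k, uniformIid ι A {u | f k ≠ g k ∧ u (f k) = u (g k)} := by
        rw [Set.ofPred_exists]; exact measure_iUnion_fintype_le _ _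
    _ ≤ Fintype.card κ * (Fintype.card A : ℝ≥0∞)⁻¹ := by
        refine (Finset.sum_le_sum fun k _ => hk k).trans_eq ?_
        rw [Finset.sum_const, Finset.card_univ, nsmul_eq_mul]

end Iid

section Counting

open scoped Classical Finset

variable {Ω ι : Type*} [MeasurableSpace Ω] [Fintype ι]

lemma mul_measure_le_sum_measure (μ : Measure Ω) {E : ι → Set Ω} (hE : ∀ i, MeasurableSet (E i))
    (k : ℕ) : k * μ {ω | k ≤ #{i | ω ∈ E i}} ≤ ∑ i, μ (E i) := by
  have hcount : ∀ ω, ∑ i, (E i).indicator 1 ω = (#{i | ω ∈ E i} : ℝ≥0∞) := fun ω => by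
    simp [Set.indicator_apply, Finset.sum_boole]
  calc (k : ℝ≥0∞) * μ {ω | k ≤ #{i | ω ∈ E i}}
      = k * μ {ω | (k : ℝ≥0∞) ≤ ∑ i, (E i).indicator 1 ω} := by simp only [hcount, Nat.cast_le]
    _ ≤ ∫⁻ ω, ∑ i, (E i).indicator 1 ω ∂μ :=
        mul_meas_ge_le_lintegral₀ (Finset.aemeasurable_fun_sum _ fun i _ =>
          (measurable_const.indicator (hE i)).aemeasurable) _
    _ = ∑ i, μ (E i) := by
        rw [lintegral_finsetSum (f := fun i => (E i).indicator 1) _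
          fun i _ => measurable_const.indicator (hE i)]
        exact Finset.sum_congr rfl fun i _ => lintegral_indicator_one (hE i)

lemma four_le_card_add_mul_measure (π : Measure Ω) [IsProbabilityMeasure π] {E E' : ι → Set Ω}
    (hE : ∀ i, MeasurableSet (E i)) (hEE' : ∀ i, π (E' i) = π (E i)) {B : Set Ω}
    (hEB : ∀ i, E' i ∩ E i ⊆ B) (hB : Bᶜ ⊆ {ω | 2 ≤ #{i | ω ∈ E i}}) :
    4 ≤ Fintype.card ι + (Fintype.card ι + 4) * π B := by
  have hedge : ∀ i, 2 * π (E i) ≤ 1 + π B := fun i => by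
    calc 2 * π (E i) = π (E' i) + π (E i) := by rw [hEE', two_mul]
      _ = π (E' i ∪ E i) + π (E' i ∩ E i) := (measure_union_add_inter _ (hE i)).symm
      _ ≤ 1 + π B := add_le_add prob_le_one (measure_mono (hEB i))
  calc (4 : ℝ≥0∞) = 4 * π (Bᶜ ∪ B) := by rw [Set.compl_union_self, measure_univ, mul_one]
    _ ≤ 4 * (π Bᶜ + π B) := by gcongr; exact measure_union_le _ _
    _ ≤ 2 * (2 * π {ω | 2 ≤ #{i | ω ∈ E i}}) + 4 * π B := by
        rw [mul_add, ← mul_assoc, two_mul (2 : ℝ≥0∞), two_add_two_eq_four]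
        gcongr
    _ ≤ ∑ i, 2 * π (E i) + 4 * π B := by
        rw [← Finset.mul_sum]
        gcongr
        exact_mod_cast mul_measure_le_sum_measure π hE 2
    _ ≤ ∑ _i : ι, (1 + π B) + 4 * π B := by gcongr with i; exact hedge i
    _ = Fintype.card ι + (Fintype.card ι + 4) * π B := by
        rw [Finset.sum_const, Finset.card_univ, nsmul_eq_mul]; ring

end Counting

section Labels

variable {G ι κ A : Type*} [Fintype κ] [DecidableEq A]

def imageLabels (e : G → κ → ι) (u : ι → A) : G → Finset A :=
  fun x => Finset.univ.image fun k => u (e x k)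

@[simp]
lemma mem_imageLabels {e : G → κ → ι} {u : ι → A} {x : G} {a : A} :
    a ∈ imageLabels e u x ↔ ∃ k, u (e x k) = a := by
  simp [imageLabels]

lemma measurable_configTranslate [Group G] {Λ : Type*} [MeasurableSpace Λ] (g : G) :
    Measurable (configTranslate (Λ := Λ) g) :=
  measurable_pi_lambda _ fun _ => measurable_pi_apply _

lemma measurable_imageLabels [Countable A] [MeasurableSpace A] [MeasurableSingletonClass A]
    [MeasurableSpace (Finset A)] (e : G → κ → ι) : Measurable (imageLabels (A := A) e) :=
  measurable_pi_lambda _ fun x =>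
    (Measurable.of_discrete (f := fun w : κ → A => Finset.univ.image w)).comp
      (measurable_pi_lambda _ fun k => measurable_pi_apply (e x k))

lemma isInvariantConfigMeasure_map_imageLabels [Group G] [Fintype A] [Nonempty A]
    [MeasurableSpace A] [MeasurableSingletonClass A] [MeasurableSpace (Finset A)]
    (e : G → κ → ι) (he : ∀ g : G, ∃ τ : ι → ι, Injective τ ∧ ∀ x k, e (g⁻¹ * x) k = τ (e x k)) :
    IsInvariantConfigMeasure ((uniformIid ι A).map (imageLabels e)) := by
  intro g
  obtain ⟨τ, hτ, he⟩ := he g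
  have hcomm : configTranslate g ∘ imageLabels e = imageLabels (A := A) e ∘ fun u => u ∘ τ := by
    funext u x
    simp [configTranslate, imageLabels, he]
  rw [Measure.map_map (measurable_configTranslate g) (measurable_imageLabels e), hcomm,
    ← Measure.map_map (measurable_imageLabels e) (by fun_prop), uniformIid_map_comp hτ]

end Labels

namespace ThreeInvolutions

open Monoid.CoprodI

abbrev Γ : Type := Monoid.CoprodI fun _ : Fin 3 => Multiplicative (ZMod 2)

def gen (i : Fin 3) : Γ := of (i := i) (Multiplicative.ofAdd 1)

lemma gen_mul_self (i : Fin 3) : gen i * gen i = 1 := by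
  rw [gen, ← map_mul]; exact map_one _

lemma inv_gen (i : Fin 3) : (gen i)⁻¹ = gen i := inv_eq_of_mul_eq_one_right (gen_mul_self i)

lemma mul_gen_mul_gen (x : Γ) (i : Fin 3) : x * gen i * gen i = x := by
  rw [mul_assoc, gen_mul_self, mul_one]

instance : Countable Γ :=
  (show Injective fun x : Γ => (Word.equiv x).toList from
    fun _ _ h => Word.equiv.injective (Word.ext h)).countable

def lastLetter (x : Γ) : Option (Fin 3) := (Word.equiv x⁻¹).fstIdx

lemma lastLetter_one : lastLetter 1 = none := by
  simp [lastLetter, Word.equiv, Word.fstIdx, Word.empty]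

lemma eq_one_of_lastLetter_eq_none {x : Γ} (h : lastLetter x = none) : x = 1 := by
  have hnil : (Word.equiv x⁻¹).toList = [] := by simpa [lastLetter, Word.fstIdx] using h
  have : Word.equiv x⁻¹ = Word.equiv 1 := Word.ext (by rw [hnil]; rfl)
  simpa using Word.equiv.injective this

lemma lastLetter_mul_gen (x : Γ) (i : Fin 3) :
    lastLetter (x * gen i) = some i ↔ lastLetter x ≠ some i := by
  have hsmul : Word.equiv (x * gen i)⁻¹ =
      of (M := fun _ : Fin 3 => Multiplicative (ZMod 2)) (i := i) (Multiplicative.ofAdd 1) •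
        Word.equiv x⁻¹ := by
    rw [mul_inv_rev, inv_gen, Word.equiv, Equiv.coe_fn_mk, Equiv.coe_fn_mk, mul_smul]; rfl
  have hZ2 : ∀ h : Multiplicative (ZMod 2), Multiplicative.ofAdd 1 * h ≠ 1 ↔ ¬ h ≠ 1 := by decide
  rw [lastLetter, hsmul, Word.fstIdx_of_smul_eq_some_iff, hZ2,
    ← Word.fstIdx_eq_some_iff]
  rfl

lemma lastLetter_gen (i : Fin 3) : lastLetter (gen i) = some i := by
  simpa [lastLetter_one] using lastLetter_mul_gen 1 i

lemma gen_ne_one (i : Fin 3) : gen i ≠ 1 := fun h => by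
  simpa [h, lastLetter_one] using lastLetter_gen i

lemma gen_injective : Injective gen := fun i j h =>
  Option.some.inj (by rw [← lastLetter_gen, h, lastLetter_gen])

/-- The Cayley-tree edge `{x, x * gen i}` is indexed by its endpoint farther from `1`, the one
whose last letter is `i`. -/
def edge (x : Γ) (i : Fin 3) : Γ := if lastLetter x = some i then x else x * gen i

lemma lastLetter_edge (x : Γ) (i : Fin 3) : lastLetter (edge x i) = some i := by
  unfold edge
  split_ifs with h
  · exact h
  · exact (lastLetter_mul_gen x i).2 h

lemma edge_ne_one (x : Γ) (i : Fin 3) : edge x i ≠ 1 := fun h => by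
  simpa [h, lastLetter_one] using lastLetter_edge x i

lemma edge_of_lastLetter {x : Γ} {i : Fin 3} (h : lastLetter x = some i) : edge x i = x :=
  if_pos h

lemma edge_mul_gen (x : Γ) (i : Fin 3) : edge (x * gen i) i = edge x i := by
  by_cases h : lastLetter x = some i
  · rw [edge, if_neg fun h' => (lastLetter_mul_gen x i).1 h' h, mul_gen_mul_gen,
      edge_of_lastLetter h]
  · rw [edge_of_lastLetter ((lastLetter_mul_gen x i).2 h), edge, if_neg h]

lemma edge_eq_or (x : Γ) (i : Fin 3) : edge x i = x ∨ edge x i = x * gen i := by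
  unfold edge; split_ifs <;> simp

lemma edge_one (i : Fin 3) : edge 1 i = gen i := by
  rw [edge, if_neg (by simp [lastLetter_one]), one_mul]

lemma eq_of_edge_eq_edge {x y : Γ} {i j : Fin 3} (h : edge x i = edge y j) :
    i = j ∧ (y = x ∨ y = x * gen i) := by
  obtain rfl : i = j := Option.some.inj (by rw [← lastLetter_edge x i, h, lastLetter_edge])
  refine ⟨rfl, ?_⟩
  rcases edge_eq_or x i with hx | hx <;> rcases edge_eq_or y i with hy | hy <;> rw [hx, hy] at h
  · exact .inl h.symm
  · exact .inr (by rw [h, mul_gen_mul_gen])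
  · exact .inr h.symm
  · exact .inl (mul_right_cancel h).symm

lemma edge_gen_self (i : Fin 3) : edge (gen i) i = gen i := edge_of_lastLetter (lastLetter_gen i)

lemma eq_of_edge_one_eq_edge_gen {i j k : Fin 3} (h : edge 1 j = edge (gen i) k) : j = i := by
  obtain ⟨-, h | h⟩ := eq_of_edge_eq_edge h
  · exact absurd h (gen_ne_one i)
  · exact (gen_injective (by rwa [one_mul] at h)).symm

/-- Left translation by `g` as a map on edge indices; `1`, which indexes no edge, is fixed. -/
def edgeTranslate (g z : Γ) : Γ := (lastLetter z).elim z fun i => edge (g * z) i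

lemma edgeTranslate_edge (g x : Γ) (i : Fin 3) : edgeTranslate g (edge x i) = edge (g * x) i := by
  rw [edgeTranslate, lastLetter_edge, Option.elim_some]
  rcases edge_eq_or x i with h | h <;> rw [h]
  rw [← mul_assoc, edge_mul_gen]

lemma edgeTranslate_injective (g : Γ) : Injective (edgeTranslate g) := by
  intro z z' h
  rcases hz : lastLetter z with _ | i <;> rcases hz' : lastLetter z' with _ | i' <;>
    simp only [edgeTranslate, hz, hz', Option.elim_none, Option.elim_some] at h
  · exact h
  · exact absurd (h.symm.trans (eq_one_of_lastLetter_eq_none hz)) (edge_ne_one _ _)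
  · exact absurd (h.trans (eq_one_of_lastLetter_eq_none hz')) (edge_ne_one _ _)
  · obtain ⟨rfl, h | h⟩ := eq_of_edge_eq_edge h
    · exact (mul_left_cancel h).symm
    · rw [mul_assoc, mul_left_cancel_iff] at h
      rw [h] at hz'
      exact ((lastLetter_mul_gen z i).1 hz' hz).elim

/-- The two letters other than `o`, or `0` and `1` when `o = none`. -/
def childLetter (o : Option (Fin 3)) (b : Bool) : Fin 3 := o.getD 2 + bif b then 2 else 1

lemma childLetter_ne : ∀ o b, o ≠ some (childLetter o b) := by decide

lemma childLetter_injective : ∀ o, Injective (childLetter o) := by decide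

/-- The endpoint farther from `1` of one of the two edges leading away from `1` at `x`. -/
def child (x : Γ) (b : Bool) : Γ := x * gen (childLetter (lastLetter x) b)

lemma child_eq_edge (x : Γ) (b : Bool) : child x b = edge x (childLetter (lastLetter x) b) :=
  (if_neg (childLetter_ne _ b)).symm

lemma child_injective : Injective fun q : Γ × Bool => child q.1 q.2 := by
  rintro ⟨x, b⟩ ⟨y, c⟩ (h : child x b = child y c)
  have hl : childLetter (lastLetter x) b = childLetter (lastLetter y) c := Option.some.inj <| by
    rw [← lastLetter_edge, ← child_eq_edge, h, child_eq_edge, lastLetter_edge]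
  obtain rfl : x = y := mul_right_cancel (by rw [← child, h, child, hl])
  rw [childLetter_injective _ hl]

section Construction

variable (A : Type*) [Fintype A] [DecidableEq A] [Nonempty A] [MeasurableSpace A]
  [MeasurableSingletonClass A] [MeasurableSpace (Finset A)]

/-- `ν`: each site is labelled by the marks of its three edges. -/
noncomputable def edgeMarkLaw : Measure (Γ → Finset A) :=
  (uniformIid Γ A).map (imageLabels edge)

/-- `μ`: each site is labelled by two marks of its own. -/
noncomputable def pairMarkLaw : Measure (Γ → Finset A) :=
  (uniformIid (Γ × Bool) A).map (imageLabels Prod.mk)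

/-- Each site keeps only the marks of its two edges leading away from `1`, a choice that is not
invariant under translations. -/
noncomputable def childMarkCoupling : Measure ((Γ → Finset A) × (Γ → Finset A)) :=
  (uniformIid Γ A).map fun u => (imageLabels (fun x b => child x b) u, imageLabels edge u)

instance : IsProbabilityMeasure (edgeMarkLaw A) :=
  Measure.isProbabilityMeasure_map (measurable_imageLabels _).aemeasurable

instance : IsProbabilityMeasure (pairMarkLaw A) :=
  Measure.isProbabilityMeasure_map (measurable_imageLabels _).aemeasurable

instance : IsProbabilityMeasure (childMarkCoupling A) :=
  Measure.isProbabilityMeasure_map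
    ((measurable_imageLabels _).prodMk (measurable_imageLabels _)).aemeasurable

lemma isInvariantConfigMeasure_edgeMarkLaw : IsInvariantConfigMeasure (edgeMarkLaw A) :=
  isInvariantConfigMeasure_map_imageLabels _ fun g =>
    ⟨edgeTranslate g⁻¹, edgeTranslate_injective _, fun x k => (edgeTranslate_edge _ x k).symm⟩

lemma isInvariantConfigMeasure_pairMarkLaw : IsInvariantConfigMeasure (pairMarkLaw A) :=
  isInvariantConfigMeasure_map_imageLabels _ fun g =>
    ⟨fun q => (g⁻¹ * q.1, q.2), fun q q' h => by simpa [Prod.ext_iff] using h, fun _ _ => rfl⟩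

lemma isCoupling_childMarkCoupling :
    IsCoupling (childMarkCoupling A) (pairMarkLaw A) (edgeMarkLaw A) := by
  have hmeas := (measurable_imageLabels (A := A) fun x b => child x b).prodMk
    (measurable_imageLabels (A := A) edge)
  constructor
  · have hfst : (Prod.fst ∘ fun u => (imageLabels (fun x b => child x b) u, imageLabels edge u)) =
        imageLabels (A := A) Prod.mk ∘ fun u => u ∘ fun q : Γ × Bool => child q.1 q.2 := rfl
    rw [childMarkCoupling, Measure.map_map measurable_fst hmeas, hfst,
      ← Measure.map_map (measurable_imageLabels _) (by fun_prop),
      uniformIid_map_comp child_injective, pairMarkLaw]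
  · rw [childMarkCoupling, Measure.map_map measurable_snd hmeas]
    rfl

lemma isMonotoneCoupling_childMarkCoupling : IsMonotoneCoupling (childMarkCoupling A) := by
  refine le_antisymm prob_le_one ?_
  rw [← measure_univ (μ := uniformIid Γ A)]
  refine (measure_mono fun u _ x => ?_).trans (Measure.le_map_apply (Measurable.aemeasurable
    ((measurable_imageLabels _).prodMk (measurable_imageLabels _))) _)
  intro a
  simp only [imageLabels, Finset.mem_image, Finset.mem_univ, true_and, forall_exists_index]
  rintro b rfl
  exact ⟨_, congrArg u (child_eq_edge x b).symm⟩

end Construction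

section Defects

variable (A : Type*) [DecidableEq A]

def pairDefect : Set (Γ → Finset A) :=
  {ω | (ω 1).card ≠ 2 ∨ ∃ i, (ω 1 ∩ ω (gen i)).Nonempty}

def edgeDefect : Set (Γ → Finset A) :=
  {η | (∃ i, 1 < (η 1 ∩ η (gen i)).card) ∨ ∃ a ∈ η 1, ∀ i, a ∉ η (gen i)}

variable [Fintype A] [MeasurableSpace (Finset A)] [MeasurableSingletonClass (Finset A)]

lemma measurableSet_pairDefect : MeasurableSet (pairDefect A) := by
  unfold pairDefect; measurability

lemma measurableSet_edgeDefect : MeasurableSet (edgeDefect A) := by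
  unfold edgeDefect; measurability

variable [Nonempty A] [MeasurableSpace A] [MeasurableSingletonClass A]

lemma pairMarkLaw_pairDefect_le :
    pairMarkLaw A (pairDefect A) ≤ 13 * (Fintype.card A : ℝ≥0∞)⁻¹ := by
  let f : Option (Fin 3 × Bool × Bool) → Γ × Bool := fun k => k.elim (1, false) fun k => (1, k.2.1)
  let g : Option (Fin 3 × Bool × Bool) → Γ × Bool :=
    fun k => k.elim (1, true) fun k => (gen k.1, k.2.2)
  rw [pairMarkLaw, Measure.map_apply (measurable_imageLabels _) (measurableSet_pairDefect A)]
  refine (measure_mono fun v hv => ?_).trans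
    ((uniformIid_setOf_exists_eq_le f g).trans_eq (by simp))
  rcases hv with hcard | ⟨i, a, ha⟩
  · refine ⟨none, by simp [f, g], by_contra fun hne => hcard ?_⟩
    rw [imageLabels, Finset.card_image_of_injective _ (Bool.injective_iff.2 hne), Finset.card_univ,
      Fintype.card_bool]
  · simp only [Finset.mem_inter, mem_imageLabels] at ha
    obtain ⟨⟨b, rfl⟩, c, hc⟩ := ha
    exact ⟨some (i, b, c), by simp [f, g, Prod.ext_iff, (gen_ne_one i).symm], hc.symm⟩

lemma edgeMarkLaw_edgeDefect_le :
    edgeMarkLaw A (edgeDefect A) ≤ 27 * (Fintype.card A : ℝ≥0∞)⁻¹ := by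
  let f : Fin 3 × Fin 3 × Fin 3 → Γ := fun k => edge 1 k.2.1
  let g : Fin 3 × Fin 3 × Fin 3 → Γ := fun k => edge (gen k.1) k.2.2
  rw [edgeMarkLaw, Measure.map_apply (measurable_imageLabels _) (measurableSet_edgeDefect A)]
  refine (measure_mono fun u hu => ?_).trans
    ((uniformIid_setOf_exists_eq_le f g).trans_eq (by simp))
  rcases hu with ⟨i, hcard⟩ | ⟨a, ha, hnot⟩
  · obtain ⟨a, ha, b, hb, hab⟩ := Finset.one_lt_card.1 hcard
    simp only [Finset.mem_inter, mem_imageLabels] at ha hb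
    obtain ⟨⟨j, rfl⟩, k, hk⟩ := ha
    obtain ⟨⟨j', rfl⟩, k', hk'⟩ := hb
    by_cases h : edge 1 j = edge (gen i) k
    · refine ⟨(i, j', k'), fun h' => hab ?_, hk'.symm⟩
      rw [eq_of_edge_one_eq_edge_gen h, eq_of_edge_one_eq_edge_gen (j := j') h']
    · exact ⟨(i, j, k), h, hk.symm⟩
  · obtain ⟨j, rfl⟩ := mem_imageLabels.1 ha
    exact (hnot j (mem_imageLabels.2 ⟨j, by rw [edge_gen_self, edge_one]⟩)).elim

end Defects

section Claims

open scoped Finset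

variable (A : Type*) [DecidableEq A]

/-- `x` claims the edge `{x, x * gen i}` when its `μ`-label shares a mark with the `ν`-label on the
other side of that edge. -/
def edgeClaim (i : Fin 3) (x : Γ) : Set ((Γ → Finset A) × (Γ → Finset A)) :=
  {p | (p.1 x ∩ p.2 (x * gen i)).Nonempty}

def coupledDefect : Set ((Γ → Finset A) × (Γ → Finset A)) :=
  {p | ∀ x, p.1 x ≤ p.2 x}ᶜ ∪ Prod.fst ⁻¹' pairDefect A ∪ Prod.snd ⁻¹' edgeDefect A

lemma edgeClaim_inter_subset_coupledDefect (i : Fin 3) :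
    edgeClaim A i (gen i) ∩ edgeClaim A i 1 ⊆ coupledDefect A := by
  rintro p ⟨⟨a, ha⟩, ⟨b, hb⟩⟩
  by_contra hp
  simp only [coupledDefect, pairDefect, edgeDefect, Set.mem_union, Set.mem_compl_iff,
    Set.mem_preimage, Set.mem_ofPred_eq, not_or, not_not, not_exists, not_lt] at hp
  obtain ⟨⟨hmono, -, hdisj⟩, hsingle, -⟩ := hp
  rw [gen_mul_self, Finset.mem_inter] at ha
  rw [one_mul, Finset.mem_inter] at hb
  have hab : a = b := Finset.card_le_one.1 (hsingle i) a
    (Finset.mem_inter.2 ⟨ha.2, hmono _ ha.1⟩) b (Finset.mem_inter.2 ⟨hmono _ hb.1, hb.2⟩)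
  subst hab
  exact hdisj i ⟨a, Finset.mem_inter.2 ⟨hb.1, ha.1⟩⟩

open scoped Classical in
lemma compl_coupledDefect_subset :
    (coupledDefect A)ᶜ ⊆ {p | 2 ≤ #{i | p ∈ edgeClaim A i 1}} := by
  intro p hp
  simp only [coupledDefect, pairDefect, edgeDefect, Set.mem_union, Set.mem_compl_iff,
    Set.mem_preimage, Set.mem_ofPred_eq, not_or, not_not, not_exists, not_lt, not_and,
    not_forall] at hp
  obtain ⟨⟨hmono, hcard, -⟩, hsingle, hcover⟩ := hp
  obtain ⟨a, b, hab, hpair⟩ := Finset.card_eq_two.1 hcard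
  have ha : a ∈ p.1 1 := by simp [hpair]
  have hb : b ∈ p.1 1 := by simp [hpair]
  obtain ⟨i, hi⟩ := hcover a (hmono 1 ha)
  obtain ⟨j, hj⟩ := hcover b (hmono 1 hb)
  have hij : i ≠ j := by
    rintro rfl
    exact hab (Finset.card_le_one.1 (hsingle i) a (Finset.mem_inter.2 ⟨hmono 1 ha, hi⟩) b
      (Finset.mem_inter.2 ⟨hmono 1 hb, hj⟩))
  refine Finset.one_lt_card.2 ⟨i, ?_, j, ?_, hij⟩ <;>
    simp only [Finset.mem_filter, Finset.mem_univ, true_and, edgeClaim, one_mul]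
  exacts [⟨a, Finset.mem_inter.2 ⟨ha, hi⟩⟩, ⟨b, Finset.mem_inter.2 ⟨hb, hj⟩⟩]

variable [Fintype A] [MeasurableSpace (Finset A)] [MeasurableSingletonClass (Finset A)]

lemma measurableSet_edgeClaim (i : Fin 3) (x : Γ) : MeasurableSet (edgeClaim A i x) := by
  unfold edgeClaim; measurability

lemma measure_edgeClaim_mul_left {π : Measure ((Γ → Finset A) × (Γ → Finset A))}
    (hπ : IsInvariantPairMeasure π) (i : Fin 3) (g x : Γ) :
    π (edgeClaim A i (g * x)) = π (edgeClaim A i x) := by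
  have hT : Measurable fun p : (Γ → Finset A) × (Γ → Finset A) =>
      (configTranslate g p.1, configTranslate g p.2) :=
    ((measurable_configTranslate g).comp measurable_fst).prodMk
      ((measurable_configTranslate g).comp measurable_snd)
  conv_lhs => rw [← hπ g, Measure.map_apply hT (measurableSet_edgeClaim A i _)]
  congr 1
  ext p
  simp [edgeClaim, configTranslate, mul_assoc]

end Claims

section NoInvariantCoupling

variable (A : Type*) [Fintype A] [DecidableEq A] [Nonempty A] [MeasurableSpace A]
  [MeasurableSingletonClass A] [MeasurableSpace (Finset A)] [MeasurableSingletonClass (Finset A)]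

lemma measure_coupledDefect_le (π : Measure ((Γ → Finset A) × (Γ → Finset A)))
    [IsProbabilityMeasure π] (hc : IsCoupling π (pairMarkLaw A) (edgeMarkLaw A))
    (hm : IsMonotoneCoupling π) : π (coupledDefect A) ≤ 40 * (Fintype.card A : ℝ≥0∞)⁻¹ := by
  have hmono : π {p | ∀ x, p.1 x ≤ p.2 x}ᶜ = 0 := (prob_compl_eq_zero_iff (by measurability)).2 hm
  have hfst : π (Prod.fst ⁻¹' pairDefect A) ≤ 13 * (Fintype.card A : ℝ≥0∞)⁻¹ := by
    rw [← Measure.map_apply measurable_fst (measurableSet_pairDefect A), hc.1]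
    exact pairMarkLaw_pairDefect_le A
  have hsnd : π (Prod.snd ⁻¹' edgeDefect A) ≤ 27 * (Fintype.card A : ℝ≥0∞)⁻¹ := by
    rw [← Measure.map_apply measurable_snd (measurableSet_edgeDefect A), hc.2]
    exact edgeMarkLaw_edgeDefect_le A
  calc π (coupledDefect A)
      ≤ π {p | ∀ x, p.1 x ≤ p.2 x}ᶜ + π (Prod.fst ⁻¹' pairDefect A) +
          π (Prod.snd ⁻¹' edgeDefect A) :=
        (measure_union_le _ _).trans (add_le_add (measure_union_le _ _) le_rfl)
    _ ≤ 0 + 13 * (Fintype.card A : ℝ≥0∞)⁻¹ + 27 * (Fintype.card A : ℝ≥0∞)⁻¹ := by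
        gcongr; exact hmono.le
    _ = 40 * (Fintype.card A : ℝ≥0∞)⁻¹ := by ring

lemma not_isInvariantPairMeasure (hA : 280 < Fintype.card A)
    (π : Measure ((Γ → Finset A) × (Γ → Finset A))) [IsProbabilityMeasure π]
    (hc : IsCoupling π (pairMarkLaw A) (edgeMarkLaw A)) (hm : IsMonotoneCoupling π) :
    ¬ IsInvariantPairMeasure π := by
  intro hπ
  have hcount := four_le_card_add_mul_measure π (E := fun i => edgeClaim A i 1)
    (E' := fun i => edgeClaim A i (gen i)) (fun i => measurableSet_edgeClaim A i 1)
    (fun i => by simpa using measure_edgeClaim_mul_left A hπ i (gen i) 1)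
    (edgeClaim_inter_subset_coupledDefect A) (compl_coupledDefect_subset A)
  rw [Fintype.card_fin, Nat.cast_ofNat, show (3 + 4 : ℝ≥0∞) = 7 by norm_num] at hcount
  have hsmall : 7 * π (coupledDefect A) < 1 := by
    calc 7 * π (coupledDefect A) ≤ 7 * (40 * (Fintype.card A : ℝ≥0∞)⁻¹) := by
          gcongr; exact measure_coupledDefect_le A π hc hm
      _ < 1 := by
          rw [← mul_assoc, ← div_eq_mul_inv, ENNReal.div_lt_iff (by simp) (by simp), one_mul]
          norm_num; exact_mod_cast hA
  exact (ENNReal.add_lt_add_left (a := 3) (by simp) hsmall).not_ge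
    (by rwa [three_add_one_eq_four])

end NoInvariantCoupling

end ThreeInvolutions

open ThreeInvolutions in
/-- Let `S` be a finite set with `|S| = n ≥ 1050` and let `G = ℤ/2 * ℤ/2 * ℤ/2` be the free
product of three copies of `ℤ/2`. Then there are two `G`-invariant probability measures `μ`,
`ν` on the configuration space `(Finset S)^G` (labels ordered by inclusion) that admit a
monotone coupling, but no monotone coupling of them is invariant under the diagonal
left-translation action of `G`. -/
theorem no_invariant_monotone_coupling_finset_labels
    (S : Type*) [Fintype S] (hS : 1050 ≤ Fintype.card S)
    [MeasurableSpace (Finset S)] [MeasurableSingletonClass (Finset S)] :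
    ∃ μ ν : Measure ((Monoid.CoprodI fun _ : Fin 3 => Multiplicative (ZMod 2)) → Finset S),
      IsProbabilityMeasure μ ∧ IsProbabilityMeasure ν ∧
      IsInvariantConfigMeasure μ ∧ IsInvariantConfigMeasure ν ∧
      (∃ π, IsProbabilityMeasure π ∧ IsCoupling π μ ν ∧ IsMonotoneCoupling π) ∧
      ∀ π, IsProbabilityMeasure π → IsCoupling π μ ν → IsMonotoneCoupling π →
        ¬ IsInvariantPairMeasure π := by
  classical
  let _ : MeasurableSpace S := ⊤
  have : MeasurableSingletonClass S := ⟨fun _ => MeasurableSpace.measurableSet_top⟩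
  have : Nonempty S := Fintype.card_pos_iff.1 (by omega)
  exact ⟨pairMarkLaw S, edgeMarkLaw S, inferInstance, inferInstance,
    isInvariantConfigMeasure_pairMarkLaw S, isInvariantConfigMeasure_edgeMarkLaw S,
    ⟨childMarkCoupling S, inferInstance, isCoupling_childMarkCoupling S,
      isMonotoneCoupling_childMarkCoupling S⟩,
    fun π _ hc hm => not_isInvariantPairMeasure S (by omega) π hc hm⟩
end

section
/- Let T be a 3-regular tree with vertex set V and edge set E, and let (η_e)_{e ∈ E} be an i.i.d. family of {0,1}-valued random variables with P(η_e = 1) = 1/2. For each vertex v define X̂(v) := 0 if the three edges incident to v all carry equal label, and X̂(v) := 1 otherwise; define Y(v) := max{η_e : e incident to v}. Then X̂(v) ≤ Y(v) for every vertex v, and (X̂(v))_{v ∈ V} is an i.i.d. family with P(X̂(v) = 1) = 3/4 for every v. In particular, for any finite set of distinct vertices v_1, …, v_k, w_1, …, w_l, one has P(X̂(v_1) = 1, …, X̂(v_k) = 1, X̂(w_1) = 0, …, X̂(w_l) = 0) = (3/4)^k (1/4)^l. -/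
/-!
`Xhat v = false` exactly when the three labels at `v` agree. In a finite vertex set `S` of a tree,
a vertex `v` farthest from a fixed root has at most one neighbour in `S`, so all edges at `v` but
one, `e₀`, meet no other vertex of `S`. Given the labels of `e₀` and of all edges at `S \ {v}`,
the event `Xhat v = false` asks two fresh fair coins to copy the label of `e₀`, which has
probability `1/4` whatever the conditioning. Induction on `S` gives
`P (⋂ v ∈ S, {Xhat v = true}) = (3/4) ^ #S`, i.e. independence of these events, and for
`Bool`-valued variables this is independence of the family.
-/

open MeasureTheory ProbabilityTheory Finset
open scoped ENNReal

namespace ProbabilityTheory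

variable {Ω ι β : Type*}

def IsDeterminedBy (η : ι → Ω → β) (s : Finset ι) (A : Set Ω) : Prop :=
  ∀ ⦃ω ω'⦄, (∀ e ∈ s, η e ω = η e ω') → ω ∈ A → ω' ∈ A

namespace IsDeterminedBy

variable {η : ι → Ω → β} {s t : Finset ι} {A : Set Ω}

lemma mono (hA : IsDeterminedBy η s A) (hst : s ⊆ t) : IsDeterminedBy η t A :=
  fun _ _ heq => hA fun e he => heq e (hst he)

lemma iInter {κ : Sort*} {A : κ → Set Ω} (hA : ∀ i, IsDeterminedBy η s (A i)) :
    IsDeterminedBy η s (⋂ i, A i) :=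
  fun _ _ heq hω => Set.mem_iInter.2 fun i => hA i heq (Set.mem_iInter.1 hω i)

lemma preimage_image_eq (hA : IsDeterminedBy η s A) :
    (fun ω (e : s) => η e ω) ⁻¹' ((fun ω (e : s) => η e ω) '' A) = A :=
  Set.Subset.antisymm (fun _ ⟨_, hω, heq⟩ => hA (fun e he => congrFun heq ⟨e, he⟩) hω)
    (Set.subset_preimage_image _ _)

lemma measurableSet [MeasurableSpace Ω] [MeasurableSpace β] [Countable β]
    [MeasurableSingletonClass β] (hη : ∀ e, Measurable (η e)) (hA : IsDeterminedBy η s A) :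
    MeasurableSet A := by
  rw [← hA.preimage_image_eq]
  exact measurable_pi_lambda (fun ω (e : s) => η e ω) (fun e => hη e)
    (Set.to_countable _).measurableSet

end IsDeterminedBy

variable [MeasurableSpace Ω] {P : Measure Ω}

lemma IndepFun.measure_preimage_inter_eq_mul_of_uniform {α γ : Type*} [MeasurableSpace α]
    [MeasurableSpace γ] [Fintype γ] [MeasurableSingletonClass γ] {U : Ω → α} {Y : Ω → γ}
    (hU : Measurable U) (hY : Measurable Y) (hUY : IndepFun U Y P) {q : ℝ≥0∞}
    (hq : ∀ y, P (Y ⁻¹' {y}) = q) {A : Set α} (hA : MeasurableSet A) {g : α → γ}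
    (hg : Measurable g) :
    P (U ⁻¹' A ∩ {ω | Y ω = g (U ω)}) = q * P (U ⁻¹' A) := by
  have hpiece : ∀ y, MeasurableSet (U ⁻¹' (A ∩ g ⁻¹' {y})) :=
    fun y => hU (hA.inter (hg (measurableSet_singleton y)))
  have hdisj : Pairwise (Function.onFun Disjoint fun y => U ⁻¹' (A ∩ g ⁻¹' {y})) :=
    (pairwise_disjoint_fiber (g ∘ U)).mono fun _ _ h =>
      h.mono (fun _ hω => hω.2) (fun _ hω => hω.2)
  calc P (U ⁻¹' A ∩ {ω | Y ω = g (U ω)})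
      = P (⋃ y, U ⁻¹' (A ∩ g ⁻¹' {y}) ∩ Y ⁻¹' {y}) := by
        congr 1; ext ω; simp [eq_comm]
    _ = ∑ y, P (U ⁻¹' (A ∩ g ⁻¹' {y})) * q := by
        rw [measure_iUnion
          (hdisj.mono fun _ _ h => h.mono Set.inter_subset_left Set.inter_subset_left)
          (fun y => (hpiece y).inter (hY (measurableSet_singleton y))), tsum_fintype]
        simp_rw [hUY.measure_inter_preimage_eq_mul _ _ (hA.inter (hg (measurableSet_singleton _)))
          (measurableSet_singleton _), hq]
    _ = q * P (⋃ y, U ⁻¹' (A ∩ g ⁻¹' {y})) := by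
        rw [measure_iUnion hdisj hpiece, tsum_fintype, Finset.mul_sum]
        simp_rw [mul_comm q]
    _ = q * P (U ⁻¹' A) := by
        congr 2; ext ω; simp

lemma measure_preimage_singleton_eq_half [IsProbabilityMeasure P] {X : Ω → Bool}
    (hX : Measurable X) (hfair : P {ω | X ω = true} = 1 / 2) (b : Bool) :
    P (X ⁻¹' {b}) = 1 / 2 := by
  cases b
  · have htrue : MeasurableSet {ω | X ω = true} := hX (measurableSet_singleton true)
    have hcompl : X ⁻¹' {false} = {ω | X ω = true}ᶜ := by ext ω; simp
    rw [hcompl, prob_compl_eq_one_sub htrue, hfair]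
    norm_num
  · exact hfair

section FairCoins

variable [IsProbabilityMeasure P] {η : ι → Ω → Bool} (hindep : iIndepFun η P)
  (hmeas : ∀ e, Measurable (η e)) (hfair : ∀ e, P {ω | η e ω = true} = 1 / 2)
include hindep hmeas hfair

lemma iIndepFun.measure_preimage_singleton_eq_half_pow (t : Finset ι) (y : t → Bool) :
    P ((fun ω (e : t) => η e ω) ⁻¹' {y}) = (1 / 2) ^ #t := by
  have hset : (fun ω (e : t) => η e ω) ⁻¹' {y} = ⋂ e : t, η e ⁻¹' {y e} := by
    ext ω; simp [funext_iff]
  rw [hset, (hindep.precomp Subtype.val_injective).meas_iInter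
      fun e => ⟨{y e}, measurableSet_singleton _, rfl⟩]
  simp [measure_preimage_singleton_eq_half (hmeas _) (hfair _)]

theorem measure_inter_setOf_forall_eq_of_isDeterminedBy {s t : Finset ι} (hst : Disjoint s t)
    {e₀ : ι} (he₀ : e₀ ∈ s) {A : Set Ω} (hA : IsDeterminedBy η s A) :
    P (A ∩ {ω | ∀ e ∈ t, η e ω = η e₀ ω}) = (1 / 2) ^ #t * P A := by
  classical
  set U := fun ω (e : s) => η e ω
  set Y := fun ω (e : t) => η e ω
  have hU : Measurable U := measurable_pi_lambda _ fun e => hmeas e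
  have hevent : {ω | ∀ e ∈ t, η e ω = η e₀ ω} = {ω | Y ω = fun _ => U ω ⟨e₀, he₀⟩} := by
    ext ω; simp [Y, U, funext_iff]
  rw [hevent, ← hA.preimage_image_eq]
  exact (hindep.indepFun_finset s t hst hmeas).measure_preimage_inter_eq_mul_of_uniform hU
    (measurable_pi_lambda Y fun e => hmeas e)
    (hindep.measure_preimage_singleton_eq_half_pow hmeas hfair t)
    (Set.to_countable (U '' A)).measurableSet (measurable_of_countable fun u _ => u ⟨e₀, he₀⟩)

end FairCoins

lemma iIndepFun_of_iIndepSet_setOf_eq_true {X : ι → Ω → Bool}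
    (h : iIndepSet (fun i => {ω | X i ω = true}) P) : iIndepFun X P := by
  convert (h.iIndepFun_indicator (β := ℕ)).comp (fun _ n => n == 1)
    (fun _ => measurable_of_countable _) with i
  funext ω
  by_cases hω : X i ω = true <;> simp [hω, Set.indicator]

lemma iIndepFun.measure_forall_eq_true_forall_eq_false {V : Type*} {X : V → Ω → Bool}
    (hX : iIndepFun X P) {p q : ℝ≥0∞} (hp : ∀ v, P {ω | X v ω = true} = p)
    (hq : ∀ v, P {ω | X v ω = false} = q) {k l : ℕ} {vs : Fin k → V} {ws : Fin l → V}
    (hinj : Function.Injective (Sum.elim vs ws)) :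
    P {ω | (∀ i, X (vs i) ω = true) ∧ ∀ j, X (ws j) ω = false} = p ^ k * q ^ l := by
  set sets : Fin k ⊕ Fin l → Set Bool := Sum.elim (fun _ => {true}) (fun _ => {false})
  have hevent : {ω | (∀ i, X (vs i) ω = true) ∧ ∀ j, X (ws j) ω = false} =
      ⋂ i, X (Sum.elim vs ws i) ⁻¹' sets i := by
    ext ω; simp [sets, Sum.forall]
  rw [hevent, (hX.precomp hinj).meas_iInter fun i => ⟨sets i, .of_discrete, rfl⟩,
    Fintype.prod_sum_type]
  simp [sets, Set.preimage, hp, hq]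

end ProbabilityTheory

namespace SimpleGraph

variable {V : Type*} {T : SimpleGraph V}

lemma IsTree.exists_mem_forall_adj_eq (hT : T.IsTree) {S : Finset V} (hS : S.Nonempty) :
    ∃ v ∈ S, ∃ w, ∀ u ∈ S, T.Adj v u → u = w := by
  classical
  obtain ⟨r, hr⟩ := hS
  obtain ⟨v, hvS, hmax⟩ := S.exists_max_image (T.dist r) ⟨r, hr⟩
  obtain ⟨p, hp, -⟩ := (hT.connected r v).exists_path_of_dist
  refine ⟨v, hvS, p.penultimate, fun u huS hvu => ?_⟩
  obtain ⟨q, hq, hqlen⟩ := (hT.connected r u).exists_path_of_dist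
  -- A shortest path to the closer neighbour `u` avoids `v`, which in a tree puts `u` on `p`.
  have hlt : T.dist r u < T.dist r v :=
    lt_of_le_of_ne (hmax u huS) (hT.dist_ne_of_adj r hvu).symm
  have hvq : v ∉ q.support := fun hv => by
    have := dist_le (q.takeUntil v hv)
    have := q.length_takeUntil_le_length hv
    omega
  exact hT.isAcyclic.eq_penultimate_of_adj_end hp hvu
    (hT.isAcyclic.mem_support_of_ne_mem_support_of_adj_of_isPath hp hq hvu hvq)

variable [∀ v, Fintype (T.neighborSet v)]

variable (T) in
open Classical in
noncomputable def incidentEdges (v : V) : Finset T.edgeSet :=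
  (T.incidenceFinset v).subtype (· ∈ T.edgeSet)

lemma mem_incidentEdges {v : V} {e : T.edgeSet} : e ∈ T.incidentEdges v ↔ v ∈ (e : Sym2 V) := by
  classical
  obtain ⟨e, he⟩ := e
  simp [incidentEdges, incidenceSet, he]

lemma card_incidentEdges (v : V) : #(T.incidentEdges v) = T.degree v := by
  classical
  rw [incidentEdges, card_subtype, filter_true_of_mem
    (fun e he => ((T.mem_incidenceFinset v e).1 he).1), card_incidenceFinset_eq_degree]

lemma incidentEdges_nonempty {v : V} (hv : T.degree v ≠ 0) : (T.incidentEdges v).Nonempty :=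
  card_pos.1 (by rw [card_incidentEdges]; exact Nat.pos_of_ne_zero hv)

lemma IsTree.exists_disjoint_biUnion_incidentEdges_erase [DecidableEq V] (hT : T.IsTree)
    (hdeg : ∀ v, T.degree v ≠ 0) {S : Finset V} (hS : S.Nonempty) :
    ∃ v ∈ S, ∃ e₀ ∈ T.incidentEdges v,
      Disjoint ((S.erase v).biUnion T.incidentEdges) ((T.incidentEdges v).erase e₀) := by
  obtain ⟨v, hv, w, hw⟩ := hT.exists_mem_forall_adj_eq hS
  obtain ⟨e₀, he₀, hwe₀⟩ :
      ∃ e₀ ∈ T.incidentEdges v, T.Adj v w → (e₀ : Sym2 V) = s(v, w) := by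
    by_cases hvw : T.Adj v w
    · exact ⟨⟨s(v, w), hvw⟩, mem_incidentEdges.2 (Sym2.mem_mk_left _ _), fun _ => rfl⟩
    · obtain ⟨e₀, he₀⟩ := incidentEdges_nonempty (hdeg v)
      exact ⟨e₀, he₀, fun h => absurd h hvw⟩
  refine ⟨v, hv, e₀, he₀, Finset.disjoint_left.2 fun e he he' => ?_⟩
  obtain ⟨u, hu, hue⟩ := mem_biUnion.1 he
  obtain ⟨hne, hev⟩ := mem_erase.1 he'
  have hevu : (e : Sym2 V) = s(v, u) :=
    (Sym2.mem_and_mem_iff (ne_of_mem_erase hu).symm).1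
      ⟨mem_incidentEdges.1 hev, mem_incidentEdges.1 hue⟩
  have hvu : T.Adj v u := by rw [← mem_edgeSet, ← hevu]; exact e.2
  obtain rfl := hw u (mem_of_mem_erase hu) hvu
  exact hne (Subtype.ext (hevu.trans (hwe₀ hvu).symm))

end SimpleGraph

section PeresCoupling

open SimpleGraph

variable {V Ω : Type*} {T : SimpleGraph V} {η : T.edgeSet → Ω → Bool} {Xhat : V → Ω → Bool}
  (hXhat : ∀ v ω, Xhat v ω = true ↔
    ∃ e f : T.edgeSet, v ∈ (e : Sym2 V) ∧ v ∈ (f : Sym2 V) ∧ η e ω ≠ η f ω)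
include hXhat

lemma xhat_le_y {Y : V → Ω → Bool}
    (hY : ∀ v ω, Y v ω = true ↔ ∃ e : T.edgeSet, v ∈ (e : Sym2 V) ∧ η e ω = true) (v : V)
    (ω : Ω) : Xhat v ω ≤ Y v ω := by
  rw [Bool.le_iff_imp]
  intro hX
  obtain ⟨e, f, he, hf, hne⟩ := (hXhat v ω).1 hX
  rw [hY]
  cases hηe : η e ω
  · exact ⟨f, hf, by simpa [hηe] using hne.symm⟩
  · exact ⟨e, he, hηe⟩

variable [∀ v, Fintype (T.neighborSet v)]

lemma isDeterminedBy_xhat (v : V) (b : Bool) :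
    IsDeterminedBy η (T.incidentEdges v) {ω | Xhat v ω = b} := by
  intro ω ω' heq hω
  refine Eq.trans (Bool.eq_iff_iff.2 ?_) hω
  simp only [hXhat]
  refine exists₂_congr fun e f => and_congr_right fun he => and_congr_right fun hf => ?_
  rw [heq e (mem_incidentEdges.2 he), heq f (mem_incidentEdges.2 hf)]

variable [DecidableEq V]

lemma xhat_eq_false_iff {v : V} {e₀ : T.edgeSet} (he₀ : e₀ ∈ T.incidentEdges v) (ω : Ω) :
    Xhat v ω = false ↔ ∀ e ∈ (T.incidentEdges v).erase e₀, η e ω = η e₀ ω := by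
  rw [← Bool.not_eq_true, hXhat]
  push Not
  constructor
  · intro h e he
    exact h e e₀ (mem_incidentEdges.1 (mem_of_mem_erase he)) (mem_incidentEdges.1 he₀)
  · intro h e f he hf
    have hlabel : ∀ g : T.edgeSet, v ∈ (g : Sym2 V) → η g ω = η e₀ ω := fun g hg =>
      if hg₀ : g = e₀ then hg₀ ▸ rfl else h g (mem_erase.2 ⟨hg₀, mem_incidentEdges.2 hg⟩)
    rw [hlabel e he, hlabel f hf]

section Probability

variable [MeasurableSpace Ω] {P : Measure Ω} [IsProbabilityMeasure P] (hindep : iIndepFun η P)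
  (hmeas : ∀ e, Measurable (η e)) (hhalf : ∀ e, P {ω | η e ω = true} = 1 / 2)
  (hreg : ∀ v, T.degree v = 3)
include hindep hmeas hhalf hreg

lemma measure_inter_xhat_eq_false {v : V} {e₀ : T.edgeSet}
    (he₀ : e₀ ∈ T.incidentEdges v) {s : Finset T.edgeSet} (he₀s : e₀ ∈ s)
    (hdisj : Disjoint s ((T.incidentEdges v).erase e₀)) {A : Set Ω}
    (hA : IsDeterminedBy η s A) :
    P (A ∩ {ω | Xhat v ω = false}) = 1 / 4 * P A := by
  have hevent : {ω | Xhat v ω = false} =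
      {ω | ∀ e ∈ (T.incidentEdges v).erase e₀, η e ω = η e₀ ω} :=
    Set.ext (xhat_eq_false_iff hXhat he₀)
  rw [hevent, measure_inter_setOf_forall_eq_of_isDeterminedBy hindep hmeas hhalf hdisj he₀s hA,
    card_erase_of_mem he₀, card_incidentEdges, hreg, one_div, ← ENNReal.inv_pow]
  norm_num

lemma measure_inter_xhat_eq_true {v : V} {e₀ : T.edgeSet}
    (he₀ : e₀ ∈ T.incidentEdges v) {s : Finset T.edgeSet} (he₀s : e₀ ∈ s)
    (hdisj : Disjoint s ((T.incidentEdges v).erase e₀)) {A : Set Ω}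
    (hA : IsDeterminedBy η s A) :
    P (A ∩ {ω | Xhat v ω = true}) = 3 / 4 * P A := by
  have hsplit := measure_inter_add_sdiff (μ := P) A
    ((isDeterminedBy_xhat hXhat v true).measurableSet hmeas)
  have hdiff : A \ {ω | Xhat v ω = true} = A ∩ {ω | Xhat v ω = false} := by ext; simp
  rw [hdiff, measure_inter_xhat_eq_false hXhat hindep hmeas hhalf hreg he₀ he₀s hdisj hA]
    at hsplit
  refine (ENNReal.add_left_inj (by finiteness)).1 (hsplit.trans ?_)
  rw [← add_mul, ENNReal.div_add_div_same, show (3 + 1 : ℝ≥0∞) = 4 by norm_num,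
    ENNReal.div_self (by norm_num) (by norm_num), one_mul]

lemma measure_xhat_eq_false (v : V) : P {ω | Xhat v ω = false} = 1 / 4 := by
  obtain ⟨e₀, he₀⟩ := incidentEdges_nonempty (T := T) (v := v) (by rw [hreg]; norm_num)
  simpa using measure_inter_xhat_eq_false hXhat hindep hmeas hhalf hreg he₀
    (mem_singleton_self e₀) (disjoint_singleton_left.2 (notMem_erase e₀ _)) (A := Set.univ)
    fun _ _ _ h => h

lemma measure_xhat_eq_true (v : V) : P {ω | Xhat v ω = true} = 3 / 4 := by
  obtain ⟨e₀, he₀⟩ := incidentEdges_nonempty (T := T) (v := v) (by rw [hreg]; norm_num)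
  simpa using measure_inter_xhat_eq_true hXhat hindep hmeas hhalf hreg he₀
    (mem_singleton_self e₀) (disjoint_singleton_left.2 (notMem_erase e₀ _)) (A := Set.univ)
    fun _ _ _ h => h

lemma measure_biInter_xhat_eq_true (hT : T.IsTree) (S : Finset V) :
    P (⋂ v ∈ S, {ω | Xhat v ω = true}) = (3 / 4) ^ #S := by
  induction S using Finset.strongInduction with
  | H S ih =>
    rcases S.eq_empty_or_nonempty with rfl | hS
    · simp
    obtain ⟨v, hv, e₀, he₀, hdisj⟩ :=
      hT.exists_disjoint_biUnion_incidentEdges_erase (fun v => by rw [hreg]; norm_num) hS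
    have hA : IsDeterminedBy η (insert e₀ ((S.erase v).biUnion T.incidentEdges))
        (⋂ u ∈ S.erase v, {ω | Xhat u ω = true}) :=
      IsDeterminedBy.iInter fun u => IsDeterminedBy.iInter fun hu =>
        (isDeterminedBy_xhat hXhat u true).mono
          ((subset_biUnion_of_mem _ hu).trans (subset_insert _ _))
    rw [← insert_erase hv, set_biInter_insert, Set.inter_comm,
      measure_inter_xhat_eq_true hXhat hindep hmeas hhalf hreg he₀ (mem_insert_self _ _)
        (disjoint_insert_left.2 ⟨notMem_erase _ _, hdisj⟩) hA,
      ih _ (erase_ssubset hv), card_insert_of_notMem (notMem_erase _ _), pow_succ, mul_comm]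

end Probability

end PeresCoupling

/-- Let `T` be a `3`-regular tree and `(η_e)_{e ∈ E}` i.i.d. `{0,1}`-valued (here `Bool`-valued)
labels on its edges with `P(η_e = 1) = 1/2`. Define `X̂ v = 1` iff not all three edges incident
to `v` carry equal labels (i.e. iff two incident edges carry different labels), and
`Y v = max {η_e : e incident to v}` (i.e. `Y v = 1` iff some incident edge has label `1`).
Then `X̂ v ≤ Y v` pointwise, the family `(X̂ v)_{v ∈ V}` is i.i.d. with `P(X̂ v = 1) = 3/4`,
and for any distinct vertices `v_1, …, v_k, w_1, …, w_l`,
`P(X̂ v_1 = 1, …, X̂ v_k = 1, X̂ w_1 = 0, …, X̂ w_l = 0) = (3/4)^k (1/4)^l`. -/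
theorem peres_coupling_iid {V : Type*} (T : SimpleGraph V) (hT : T.IsTree)
    [∀ v, Fintype (T.neighborSet v)] (hreg : ∀ v, T.degree v = 3)
    {Ω : Type*} [MeasurableSpace Ω] (P : Measure Ω) [IsProbabilityMeasure P]
    (η : T.edgeSet → Ω → Bool)
    (hmeas : ∀ e, Measurable (η e))
    (hindep : iIndepFun η P)
    (hhalf : ∀ e, P {ω | η e ω = true} = 1 / 2)
    (Xhat Y : V → Ω → Bool)
    (hXhat : ∀ v ω, Xhat v ω = true ↔
      ∃ e f : T.edgeSet, v ∈ (e : Sym2 V) ∧ v ∈ (f : Sym2 V) ∧ η e ω ≠ η f ω)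
    (hY : ∀ v ω, Y v ω = true ↔ ∃ e : T.edgeSet, v ∈ (e : Sym2 V) ∧ η e ω = true) :
    (∀ v ω, Xhat v ω ≤ Y v ω) ∧
    iIndepFun Xhat P ∧
    (∀ v, P {ω | Xhat v ω = true} = 3 / 4) ∧
    ∀ (k l : ℕ) (vs : Fin k → V) (ws : Fin l → V),
      Function.Injective (Sum.elim vs ws) →
      P {ω | (∀ i, Xhat (vs i) ω = true) ∧ ∀ j, Xhat (ws j) ω = false} =
        (3 / 4 : ℝ≥0∞) ^ k * (1 / 4 : ℝ≥0∞) ^ l := by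
  classical
  have hprob_true := measure_xhat_eq_true hXhat hindep hmeas hhalf hreg
  have hindepX : iIndepFun Xhat P := by
    refine iIndepFun_of_iIndepSet_setOf_eq_true <| (iIndepSet_iff_meas_biInter fun v =>
      (isDeterminedBy_xhat hXhat v true).measurableSet hmeas).2 fun S => ?_
    rw [measure_biInter_xhat_eq_true hXhat hindep hmeas hhalf hreg hT,
      prod_congr rfl fun v _ => hprob_true v, prod_const]
  exact ⟨xhat_le_y hXhat hY, hindepX, hprob_true, fun k l vs ws hinj =>
    hindepX.measure_forall_eq_true_forall_eq_false hprob_true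
      (measure_xhat_eq_false hXhat hindep hmeas hhalf hreg) hinj⟩
end

section
/- Let T be a 3-regular tree with vertex set V and edge set E, let S be a set, and let λ : E → S be an edge labeling. For each vertex v define Y(v) := {λ(e) : e incident to v}. Let X : V → Finset S satisfy X(v) ⊆ Y(v) for every v. Then for every vertex v0 there is at most one neighbor v1 of v0 with the following two properties: (i) for all distinct vertices u, u′ at graph distance at most 2 from v1, |X(u)| = 2 and X(u) ∩ X(u′) = ∅; and (ii) X(v1) ∩ Y(v0) ≠ ∅. -/
/-- Let `T` be a `3`-regular tree, `λ : E → S` an edge labeling, and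
`Y v := {λ e : e incident to v}`. Let `X : V → Finset S` satisfy `X v ⊆ Y v` for all `v`.
Then for every vertex `v0` there is at most one neighbor `v1` of `v0` such that
(i) for all distinct vertices `u, u'` at graph distance at most `2` from `v1`,
`|X u| = 2` and `X u ∩ X u' = ∅`; and (ii) `X v1 ∩ Y v0 ≠ ∅`. -/
theorem mass_received_at_most_one {V S : Type*} (T : SimpleGraph V) (hT : T.IsTree)
    [∀ v, Fintype (T.neighborSet v)] (hreg : ∀ v, T.degree v = 3)
    (lam : T.edgeSet → S) (Y : V → Set S)
    (hY : ∀ v, Y v = {s | ∃ e : T.edgeSet, v ∈ (e : Sym2 V) ∧ lam e = s})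
    (X : V → Finset S) (hXY : ∀ v, ↑(X v) ⊆ Y v)
    (v0 : V) :
    ∀ u1 u2 : V, T.Adj v0 u1 → T.Adj v0 u2 →
      (∀ w w' : V, T.dist u1 w ≤ 2 → T.dist u1 w' ≤ 2 → w ≠ w' →
        (X w).card = 2 ∧ Disjoint (X w) (X w')) →
      (∀ w w' : V, T.dist u2 w ≤ 2 → T.dist u2 w' ≤ 2 → w ≠ w' →
        (X w).card = 2 ∧ Disjoint (X w) (X w')) →
      (↑(X u1) ∩ Y v0).Nonempty → (↑(X u2) ∩ Y v0).Nonempty →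
      u1 = u2 := by
  classical
  intro u1 u2 h1 h2 hu1 _hu2 hn1 hn2
  by_contra hne
  -- distances from u1
  have hd0 : T.dist u1 v0 ≤ 2 := by
    have := T.dist_le (h1.symm.toWalk)
    simpa using this.trans (by norm_num)
  have hd1 : T.dist u1 u1 ≤ 2 := by simp [SimpleGraph.dist_self]
  have hd2 : T.dist u1 u2 ≤ 2 := by
    have := T.dist_le ((h1.symm.toWalk).append (h2.toWalk))
    simpa using this
  have hv0u1 : v0 ≠ u1 := fun h => T.irrefl (h ▸ h1)
  have hv0u2 : v0 ≠ u2 := fun h => T.irrefl (h ▸ h2)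
  obtain ⟨hcard0, hdisj01⟩ := hu1 v0 u1 hd0 hd1 hv0u1
  obtain ⟨_, hdisj02⟩ := hu1 v0 u2 hd0 hd2 hv0u2
  obtain ⟨_, hdisj12⟩ := hu1 u1 u2 hd1 hd2 hne
  obtain ⟨a, ha1, haY⟩ := hn1
  obtain ⟨b, hb2, hbY⟩ := hn2
  have ha1' : a ∈ X u1 := by exact_mod_cast ha1
  have hb2' : b ∈ X u2 := by exact_mod_cast hb2
  -- Y v0 is contained in a finset of size ≤ 3
  set F : Finset S :=
    (T.neighborFinset v0).attach.image
      (fun w => lam ⟨s(v0, w.1), by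
        have := w.2; rw [SimpleGraph.mem_neighborFinset] at this
        exact this⟩) with hF
  have hFcard : F.card ≤ 3 := by
    calc F.card ≤ (T.neighborFinset v0).attach.card := Finset.card_image_le
    _ = 3 := by rw [Finset.card_attach, T.card_neighborFinset_eq_degree, hreg]
  have hYF : Y v0 ⊆ ↑F := by
    intro s hs
    rw [hY] at hs
    obtain ⟨e, hve, hle⟩ := hs
    have hme : (e : Sym2 V) ∈ T.edgeSet := e.2
    have hother : T.Adj v0 ((Sym2.Mem.other hve)) := by
      rw [← SimpleGraph.mem_edgeSet, Sym2.other_spec hve]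
      exact hme
    have hmem : (Sym2.Mem.other hve) ∈ (T.neighborFinset v0) := by
      rw [SimpleGraph.mem_neighborFinset]; exact hother
    simp only [hF, Finset.coe_image, Set.mem_image]
    refine ⟨⟨(Sym2.Mem.other hve), hmem⟩, by simp, ?_⟩
    have : (⟨s(v0, (Sym2.Mem.other hve)), by
        rw [SimpleGraph.mem_edgeSet]; exact hother⟩ : T.edgeSet) = e :=
      Subtype.ext (Sym2.other_spec hve)
    rw [this, hle]
  -- now the counting contradiction
  have haF : a ∈ F := hYF haY
  have hbF : b ∈ F := hYF hbY
  have hXF : X v0 ⊆ F := fun x hx => hYF (hXY v0 hx)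
  have hab : a ≠ b := by
    intro h
    exact (Finset.disjoint_left.mp hdisj12) ha1' (h ▸ hb2')
  have haA : a ∉ X v0 := fun h => (Finset.disjoint_left.mp hdisj01) h ha1'
  have hbA : b ∉ X v0 := fun h => (Finset.disjoint_left.mp hdisj02) h hb2'
  have hsub : insert a (insert b (X v0)) ⊆ F := by
    intro x hx
    rcases Finset.mem_insert.mp hx with rfl | hx
    · exact haF
    rcases Finset.mem_insert.mp hx with rfl | hx
    · exact hbF
    · exact hXF hx
  have hcard : (insert a (insert b (X v0))).card = 4 := by
    rw [Finset.card_insert_of_notMem (by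
        simp only [Finset.mem_insert, not_or]; exact ⟨hab, haA⟩),
      Finset.card_insert_of_notMem hbA, hcard0]
  have := Finset.card_le_card hsub
  omega
end
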